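/- Fix T > 0, Ā > 0, β̄ > 0, D ≥ 0, base meeting intensities β_K, β_I ∈ [0, β̄], a continuous function λ_I : [0,T] → ℝ, a measurable symmetric w : [0,1]² → [0,1], jointly measurable functions u : [0,1] × [0,T] × E → ℝ (continuous in t) with |u(y,t,e) − u(y,t,e')| ≤ D for all y, t, e, e', and jointly measurable p_K, p_I : [0,1] × [0,T] → [0,1] continuous in t. For z = (z_K, z_I) ∈ ℝ² define the admissible equilibrium controls (the minimizers over the control set A = [0, Ā] of the state-K and state-I Hamiltonians) by φ̂_K(y,t,z) := clamp_{[0,Ā]}(1 + β_K z_I (u(y,t,K) − u(y,t,I))) and φ̂_I(y,t,z) := clamp_{[0,Ā]}(½(λ_I(t) + 1 + β_I z_K (u(y,t,I) − u(y,t,K)))), where clamp_{[0,Ā]}(r) = min(max(r,0),Ā). Define Φ by Φ(Z)(t)(x) := ( ∫₀¹ w(x,y) φ̂_K(y,t,Z(t)(y)) p_K(y,t) dy , ∫₀¹ w(x,y) φ̂_I(y,t,Z(t)(y)) p_I(y,t) dy ). Then Φ maps 𝒵 into 𝒵, and if β̄·D < 1, Φ has exactly one fixed point in 𝒵. -/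

import Mathlib

open MeasureTheory

/-- The state space of the SKIR rumor-propagation model. -/
inductive RState | S | K | I | R
deriving DecidableEq

/-- Lebesgue measure restricted to `I = [0,1]`. -/
noncomputable def mu01 : Measure ℝ := volume.restrict (Set.Icc (0:ℝ) 1)

/-- Membership in `𝒵`: `f : [0,T] → L²(I; ℝ×ℝ)` is continuous and for every `t ∈ [0,T]` and
almost every `x ∈ I` both coordinates of `f(t)(x)` are bounded in absolute value by `Ā`. -/
def memZ (T Abar : ℝ) (f : ℝ → Lp (ℝ × ℝ) 2 mu01) : Prop :=
  ContinuousOn f (Set.Icc 0 T) ∧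
    ∀ t ∈ Set.Icc (0:ℝ) T, ∀ᵐ x ∂mu01, |(f t x).1| ≤ Abar ∧ |(f t x).2| ≤ Abar

/-- Clamping (projection) of a real number onto the control set `[0, Ā]`. -/
noncomputable def clamp (Abar r : ℝ) : ℝ := min (max r 0) Abar

namespace SKIR

instance : IsProbabilityMeasure mu01 := ⟨by simp [mu01, Real.volume_Icc]⟩

lemma clamp_mem {A : ℝ} (hA : 0 ≤ A) (r : ℝ) : clamp A r ∈ Set.Icc 0 A :=
  ⟨le_min (le_max_right r 0) hA, min_le_right _ _⟩

lemma clamp_lip (A a b : ℝ) : |clamp A a - clamp A b| ≤ |a - b| := by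
  unfold clamp
  have h1 : |max a 0 - max b 0| ≤ |a - b| := abs_max_sub_max_le_abs a b 0
  rcases le_total (max a 0) A with h | h <;> rcases le_total (max b 0) A with h' | h' <;>
    simp [min_eq_left, min_eq_right, *] <;> rw [abs_sub_le_iff] at h1 ⊢ <;>
    constructor <;> nlinarith [abs_nonneg (a-b), le_max_left a (0:ℝ), le_max_left b (0:ℝ)]

/-- The state-K integrand. -/
noncomputable def fkK (Abar betaK : ℝ) (w : ℝ → ℝ → ℝ) (u : ℝ → ℝ → RState → ℝ)
    (pK : ℝ → ℝ → ℝ) (g : ℝ → ℝ × ℝ) (t x y : ℝ) : ℝ :=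
  w x y * clamp Abar (1 + betaK * (g y).2 * (u y t RState.K - u y t RState.I)) * pK y t

/-- The state-I integrand. -/
noncomputable def fkI (Abar betaI : ℝ) (lamI : ℝ → ℝ) (w : ℝ → ℝ → ℝ)
    (u : ℝ → ℝ → RState → ℝ) (pI : ℝ → ℝ → ℝ) (g : ℝ → ℝ × ℝ) (t x y : ℝ) : ℝ :=
  w x y * clamp Abar ((lamI t + 1 + betaI * (g y).1 * (u y t RState.I - u y t RState.K)) / 2)
    * pI y t

noncomputable def Fker (Abar betaK betaI : ℝ) (lamI : ℝ → ℝ) (w : ℝ → ℝ → ℝ)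
    (u : ℝ → ℝ → RState → ℝ) (pK pI : ℝ → ℝ → ℝ) (g : ℝ → ℝ × ℝ) (t x : ℝ) : ℝ × ℝ :=
  (∫ y, fkK Abar betaK w u pK g t x y ∂mu01, ∫ y, fkI Abar betaI lamI w u pI g t x y ∂mu01)

section hyp

variable {T Abar betaBar D betaK betaI : ℝ} {lamI : ℝ → ℝ} {w : ℝ → ℝ → ℝ}
  {u : ℝ → ℝ → RState → ℝ} {pK pI : ℝ → ℝ → ℝ}

/-- bundled hypotheses -/
structure Hyp (T Abar betaBar D betaK betaI : ℝ) (lamI : ℝ → ℝ) (w : ℝ → ℝ → ℝ)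
    (u : ℝ → ℝ → RState → ℝ) (pK pI : ℝ → ℝ → ℝ) : Prop where
  hT : 0 < T
  hA : 0 < Abar
  hbetaBar : 0 < betaBar
  hD : 0 ≤ D
  hbetaK : betaK ∈ Set.Icc (0:ℝ) betaBar
  hbetaI : betaI ∈ Set.Icc (0:ℝ) betaBar
  hlamI : ContinuousOn lamI (Set.Icc 0 T)
  hwmeas : Measurable (Function.uncurry w)
  hw : ∀ x y, w x y ∈ Set.Icc (0:ℝ) 1
  humeas : ∀ e, Measurable fun q : ℝ × ℝ => u q.1 q.2 e
  hucont : ∀ y e, Continuous fun t => u y t e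
  huD : ∀ (y t : ℝ) (e e' : RState), |u y t e - u y t e'| ≤ D
  hpKmeas : Measurable fun q : ℝ × ℝ => pK q.1 q.2
  hpImeas : Measurable fun q : ℝ × ℝ => pI q.1 q.2
  hpKcont : ∀ y, Continuous fun t => pK y t
  hpIcont : ∀ y, Continuous fun t => pI y t
  hpKrange : ∀ y t, pK y t ∈ Set.Icc (0:ℝ) 1
  hpIrange : ∀ y t, pI y t ∈ Set.Icc (0:ℝ) 1

variable (H : Hyp T Abar betaBar D betaK betaI lamI w u pK pI)

include H

lemma meas_u (t : ℝ) (e : RState) : Measurable fun y => u y t e :=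
  (H.humeas e).comp (measurable_id.prodMk measurable_const)

lemma meas_pK (t : ℝ) : Measurable fun y => pK y t :=
  H.hpKmeas.comp (measurable_id.prodMk measurable_const)

lemma meas_pI (t : ℝ) : Measurable fun y => pI y t :=
  H.hpImeas.comp (measurable_id.prodMk measurable_const)

omit H in
lemma cont_clamp (A : ℝ) : Continuous (clamp A) :=
  (continuous_id.max continuous_const).min continuous_const

lemma meas_fkK2 {g : ℝ → ℝ × ℝ} (hg : Measurable g) (t : ℝ) :
    Measurable fun q : ℝ × ℝ => fkK Abar betaK w u pK g t q.1 q.2 := by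
  unfold fkK
  apply Measurable.mul
  apply Measurable.mul H.hwmeas
  · exact ((cont_clamp Abar).measurable.comp
      ((measurable_const.add ((measurable_const.mul
        ((measurable_snd.comp hg).comp measurable_snd)).mul
        (((meas_u H t RState.K).comp measurable_snd).sub
         ((meas_u H t RState.I).comp measurable_snd))))))
  · exact (meas_pK H t).comp measurable_snd

lemma meas_fkI2 {g : ℝ → ℝ × ℝ} (hg : Measurable g) (t : ℝ) :
    Measurable fun q : ℝ × ℝ => fkI Abar betaI lamI w u pI g t q.1 q.2 := by
  unfold fkI
  apply Measurable.mul
  apply Measurable.mul H.hwmeas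
  · exact ((cont_clamp Abar).measurable.comp
      (((measurable_const.add ((measurable_const.mul
        ((measurable_fst.comp hg).comp measurable_snd)).mul
        (((meas_u H t RState.I).comp measurable_snd).sub
         ((meas_u H t RState.K).comp measurable_snd)))).div_const 2)))
  · exact (meas_pI H t).comp measurable_snd

lemma meas_fkK {g : ℝ → ℝ × ℝ} (hg : Measurable g) (t x : ℝ) :
    Measurable fun y => fkK Abar betaK w u pK g t x y :=
  (meas_fkK2 H hg t).comp (measurable_const.prodMk measurable_id)

lemma meas_fkI {g : ℝ → ℝ × ℝ} (hg : Measurable g) (t x : ℝ) :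
    Measurable fun y => fkI Abar betaI lamI w u pI g t x y :=
  (meas_fkI2 H hg t).comp (measurable_const.prodMk measurable_id)

lemma fkK_mem (g : ℝ → ℝ × ℝ) (t x y : ℝ) :
    fkK Abar betaK w u pK g t x y ∈ Set.Icc 0 Abar := by
  unfold fkK
  obtain ⟨hw0, hw1⟩ := H.hw x y
  obtain ⟨hc0, hc1⟩ := clamp_mem H.hA.le (1 + betaK * (g y).2 * (u y t RState.K - u y t RState.I))
  obtain ⟨hp0, hp1⟩ := H.hpKrange y t
  constructor
  · positivity
  · calc w x y * clamp Abar _ * pK y t ≤ w x y * clamp Abar _ * 1 := by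
          apply mul_le_mul_of_nonneg_left hp1 (by positivity)
      _ = w x y * clamp Abar _ := mul_one _
      _ ≤ 1 * Abar := by apply mul_le_mul hw1 hc1 hc0 zero_le_one
      _ = Abar := one_mul _

lemma fkI_mem (g : ℝ → ℝ × ℝ) (t x y : ℝ) :
    fkI Abar betaI lamI w u pI g t x y ∈ Set.Icc 0 Abar := by
  unfold fkI
  obtain ⟨hw0, hw1⟩ := H.hw x y
  obtain ⟨hc0, hc1⟩ := clamp_mem H.hA.le ((lamI t + 1 + betaI * (g y).1 * (u y t RState.I - u y t RState.K)) / 2)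
  obtain ⟨hp0, hp1⟩ := H.hpIrange y t
  constructor
  · positivity
  · calc w x y * clamp Abar _ * pI y t ≤ w x y * clamp Abar _ * 1 := by
          apply mul_le_mul_of_nonneg_left hp1 (by positivity)
      _ = w x y * clamp Abar _ := mul_one _
      _ ≤ 1 * Abar := by apply mul_le_mul hw1 hc1 hc0 zero_le_one
      _ = Abar := one_mul _

lemma Fker_coord_abs {g : ℝ → ℝ × ℝ} (t x : ℝ) :
    |(Fker Abar betaK betaI lamI w u pK pI g t x).1| ≤ Abar ∧
    |(Fker Abar betaK betaI lamI w u pK pI g t x).2| ≤ Abar := by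
  constructor
  · have := norm_integral_le_of_norm_le_const (μ := mu01)
      (f := fun y => fkK Abar betaK w u pK g t x y) (C := Abar)
      (Filter.Eventually.of_forall fun y => by
        rw [Real.norm_eq_abs, abs_le]
        obtain ⟨h0, h1⟩ := fkK_mem H g t x y; exact ⟨by linarith, h1⟩)
    simpa [Fker, measure_univ] using this
  · have := norm_integral_le_of_norm_le_const (μ := mu01)
      (f := fun y => fkI Abar betaI lamI w u pI g t x y) (C := Abar)
      (Filter.Eventually.of_forall fun y => by
        rw [Real.norm_eq_abs, abs_le]
        obtain ⟨h0, h1⟩ := fkI_mem H g t x y; exact ⟨by linarith, h1⟩)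
    simpa [Fker, measure_univ] using this

lemma Fker_stronglyMeasurable {g : ℝ → ℝ × ℝ} (hg : Measurable g) (t : ℝ) :
    StronglyMeasurable (Fker Abar betaK betaI lamI w u pK pI g t) := by
  apply StronglyMeasurable.prodMk
  · exact (meas_fkK2 H hg t).stronglyMeasurable.integral_prod_right'
  · exact (meas_fkI2 H hg t).stronglyMeasurable.integral_prod_right'

lemma Fker_memLp {g : ℝ → ℝ × ℝ} (hg : Measurable g) (t : ℝ) :
    MemLp (Fker Abar betaK betaI lamI w u pK pI g t) 2 mu01 := by
  apply MemLp.of_bound (Fker_stronglyMeasurable H hg t).aestronglyMeasurable Abar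
  refine Filter.Eventually.of_forall fun x => ?_
  obtain ⟨h1, h2⟩ := Fker_coord_abs H (g := g) t x
  rw [Prod.norm_def]
  exact max_le (by rwa [Real.norm_eq_abs]) (by rwa [Real.norm_eq_abs])

/-- The aggregate map at a single time, as a map on L². -/
noncomputable def PhiFun (g : Lp (ℝ × ℝ) 2 mu01) (t : ℝ) : Lp (ℝ × ℝ) 2 mu01 :=
  (Fker_memLp H (Lp.stronglyMeasurable g).measurable t).toLp _

lemma PhiFun_coe (g : Lp (ℝ × ℝ) 2 mu01) (t : ℝ) :
    PhiFun H g t =ᵐ[mu01] Fker Abar betaK betaI lamI w u pK pI (⇑g) t :=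
  MemLp.coeFn_toLp _

lemma int_fkK {g : ℝ → ℝ × ℝ} (hg : Measurable g) (t x : ℝ) :
    Integrable (fun y => fkK Abar betaK w u pK g t x y) mu01 := by
  refine (integrable_const Abar).mono' (meas_fkK H hg t x).aestronglyMeasurable
    (Filter.Eventually.of_forall fun y => ?_)
  obtain ⟨h0, h1⟩ := fkK_mem H g t x y
  rw [Real.norm_eq_abs, abs_le]; exact ⟨by linarith, h1⟩

lemma int_fkI {g : ℝ → ℝ × ℝ} (hg : Measurable g) (t x : ℝ) :
    Integrable (fun y => fkI Abar betaI lamI w u pI g t x y) mu01 := by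
  refine (integrable_const Abar).mono' (meas_fkI H hg t x).aestronglyMeasurable
    (Filter.Eventually.of_forall fun y => ?_)
  obtain ⟨h0, h1⟩ := fkI_mem H g t x y
  rw [Real.norm_eq_abs, abs_le]; exact ⟨by linarith, h1⟩

lemma fkK_diff (g h : ℝ → ℝ × ℝ) (t x y : ℝ) :
    |fkK Abar betaK w u pK g t x y - fkK Abar betaK w u pK h t x y|
      ≤ betaBar * D * ‖g y - h y‖ := by
  unfold fkK
  obtain ⟨hw0, hw1⟩ := H.hw x y
  obtain ⟨hp0, hp1⟩ := H.hpKrange y t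
  set a := 1 + betaK * (g y).2 * (u y t RState.K - u y t RState.I) with ha
  set b := 1 + betaK * (h y).2 * (u y t RState.K - u y t RState.I) with hb
  have key : |w x y * clamp Abar a * pK y t - w x y * clamp Abar b * pK y t|
      = w x y * pK y t * |clamp Abar a - clamp Abar b| := by
    rw [← abs_of_nonneg (mul_nonneg hw0 hp0), ← abs_mul]; ring_nf
  rw [key]
  have h1 : |clamp Abar a - clamp Abar b| ≤ |a - b| := clamp_lip Abar a b
  have h2 : |a - b| ≤ betaK * D * |(g y).2 - (h y).2| := by
    have : a - b = betaK * (u y t RState.K - u y t RState.I) * ((g y).2 - (h y).2) := by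
      rw [ha, hb]; ring
    rw [this, abs_mul, abs_mul, abs_of_nonneg H.hbetaK.1]
    have hK0 := H.hbetaK.1
    gcongr
    exact H.huD y t RState.K RState.I
  have h3 : |(g y).2 - (h y).2| ≤ ‖g y - h y‖ := by
    have : (g y - h y).2 = (g y).2 - (h y).2 := rfl
    rw [← this, ← Real.norm_eq_abs]; exact norm_snd_le _
  have h4 : betaK * D * |(g y).2 - (h y).2| ≤ betaBar * D * ‖g y - h y‖ := by
    have h5 := H.hbetaK.2
    have h6 := H.hD
    have h7 := H.hbetaK.1
    have h8 := H.hbetaBar.le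
    gcongr
  calc w x y * pK y t * |clamp Abar a - clamp Abar b|
      ≤ 1 * |clamp Abar a - clamp Abar b| := by
        apply mul_le_mul_of_nonneg_right _ (abs_nonneg _)
        nlinarith
    _ = |clamp Abar a - clamp Abar b| := one_mul _
    _ ≤ betaBar * D * ‖g y - h y‖ := le_trans h1 (le_trans h2 h4)

lemma fkI_diff (g h : ℝ → ℝ × ℝ) (t x y : ℝ) :
    |fkI Abar betaI lamI w u pI g t x y - fkI Abar betaI lamI w u pI h t x y|
      ≤ betaBar * D * ‖g y - h y‖ := by
  unfold fkI
  obtain ⟨hw0, hw1⟩ := H.hw x y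
  obtain ⟨hp0, hp1⟩ := H.hpIrange y t
  set a := (lamI t + 1 + betaI * (g y).1 * (u y t RState.I - u y t RState.K)) / 2 with ha
  set b := (lamI t + 1 + betaI * (h y).1 * (u y t RState.I - u y t RState.K)) / 2 with hb
  have key : |w x y * clamp Abar a * pI y t - w x y * clamp Abar b * pI y t|
      = w x y * pI y t * |clamp Abar a - clamp Abar b| := by
    rw [← abs_of_nonneg (mul_nonneg hw0 hp0), ← abs_mul]; ring_nf
  rw [key]
  have h1 : |clamp Abar a - clamp Abar b| ≤ |a - b| := clamp_lip Abar a b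
  have h2 : |a - b| ≤ betaI * D * |(g y).1 - (h y).1| := by
    have : a - b = betaI * (u y t RState.I - u y t RState.K) * ((g y).1 - (h y).1) / 2 := by
      rw [ha, hb]; ring
    rw [this, abs_div, abs_mul, abs_mul, abs_of_nonneg H.hbetaI.1]
    have habs : |(2:ℝ)| = 2 := by norm_num
    rw [habs]
    have e1 : betaI * |u y t RState.I - u y t RState.K| * |(g y).1 - (h y).1|
        ≤ betaI * D * |(g y).1 - (h y).1| := by
      have hI0 := H.hbetaI.1
      gcongr
      exact H.huD y t RState.I RState.K
    have e2 : 0 ≤ betaI * D * |(g y).1 - (h y).1| :=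
      mul_nonneg (mul_nonneg H.hbetaI.1 H.hD) (abs_nonneg _)
    linarith
  have h3 : |(g y).1 - (h y).1| ≤ ‖g y - h y‖ := by
    have : (g y - h y).1 = (g y).1 - (h y).1 := rfl
    rw [← this, ← Real.norm_eq_abs]; exact norm_fst_le _
  have h4 : betaI * D * |(g y).1 - (h y).1| ≤ betaBar * D * ‖g y - h y‖ := by
    have h5 := H.hbetaI.2
    have h6 := H.hD
    have h7 := H.hbetaI.1
    have h8 := H.hbetaBar.le
    gcongr
  calc w x y * pI y t * |clamp Abar a - clamp Abar b|
      ≤ 1 * |clamp Abar a - clamp Abar b| := by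
        apply mul_le_mul_of_nonneg_right _ (abs_nonneg _)
        nlinarith
    _ = |clamp Abar a - clamp Abar b| := one_mul _
    _ ≤ betaBar * D * ‖g y - h y‖ := le_trans h1 (le_trans h2 h4)

lemma Fker_dist {g h : ℝ → ℝ × ℝ} (hg : Measurable g) (hh : Measurable h)
    (hInt : Integrable (fun y => ‖g y - h y‖) mu01) (t x : ℝ) :
    ‖Fker Abar betaK betaI lamI w u pK pI g t x - Fker Abar betaK betaI lamI w u pK pI h t x‖
      ≤ betaBar * D * ∫ y, ‖g y - h y‖ ∂mu01 := by
  have hIntC : Integrable (fun y => betaBar * D * ‖g y - h y‖) mu01 := hInt.const_mul _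
  have coordK : |(∫ y, fkK Abar betaK w u pK g t x y ∂mu01)
      - ∫ y, fkK Abar betaK w u pK h t x y ∂mu01|
      ≤ betaBar * D * ∫ y, ‖g y - h y‖ ∂mu01 := by
    rw [← integral_sub (int_fkK H hg t x) (int_fkK H hh t x), ← integral_const_mul]
    calc |∫ y, (fkK Abar betaK w u pK g t x y - fkK Abar betaK w u pK h t x y) ∂mu01|
        ≤ ∫ y, |fkK Abar betaK w u pK g t x y - fkK Abar betaK w u pK h t x y| ∂mu01 :=
          by simpa [Real.norm_eq_abs] using
            norm_integral_le_integral_norm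
              (fun y => fkK Abar betaK w u pK g t x y - fkK Abar betaK w u pK h t x y) (μ := mu01)
      _ ≤ ∫ y, betaBar * D * ‖g y - h y‖ ∂mu01 := by
          apply integral_mono ((int_fkK H hg t x).sub (int_fkK H hh t x)).abs hIntC
          intro y; exact fkK_diff H g h t x y
  have coordI : |(∫ y, fkI Abar betaI lamI w u pI g t x y ∂mu01)
      - ∫ y, fkI Abar betaI lamI w u pI h t x y ∂mu01|
      ≤ betaBar * D * ∫ y, ‖g y - h y‖ ∂mu01 := by
    rw [← integral_sub (int_fkI H hg t x) (int_fkI H hh t x), ← integral_const_mul]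
    calc |∫ y, (fkI Abar betaI lamI w u pI g t x y - fkI Abar betaI lamI w u pI h t x y) ∂mu01|
        ≤ ∫ y, |fkI Abar betaI lamI w u pI g t x y - fkI Abar betaI lamI w u pI h t x y| ∂mu01 :=
          by simpa [Real.norm_eq_abs] using
            norm_integral_le_integral_norm
              (fun y => fkI Abar betaI lamI w u pI g t x y - fkI Abar betaI lamI w u pI h t x y)
              (μ := mu01)
      _ ≤ ∫ y, betaBar * D * ‖g y - h y‖ ∂mu01 := by
          apply integral_mono ((int_fkI H hg t x).sub (int_fkI H hh t x)).abs hIntC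
          intro y; exact fkI_diff H g h t x y
  rw [Prod.norm_def]
  exact max_le (by simpa [Fker, Real.norm_eq_abs] using coordK)
    (by simpa [Fker, Real.norm_eq_abs] using coordI)

omit H in
lemma lp_int (zeta : Lp (ℝ × ℝ) 2 mu01) : Integrable (⇑zeta) mu01 :=
  memLp_one_iff_integrable.mp ((Lp.memLp zeta).mono_exponent (by norm_num))

omit H in
lemma lp_l1_le (zeta : Lp (ℝ × ℝ) 2 mu01) : ∫ y, ‖zeta y‖ ∂mu01 ≤ ‖zeta‖ := by
  rw [Lp.norm_def,
    integral_norm_eq_lintegral_enorm (Lp.stronglyMeasurable zeta).aestronglyMeasurable,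
    ← eLpNorm_one_eq_lintegral_enorm]
  exact ENNReal.toReal_mono (Lp.eLpNorm_ne_top zeta)
    (eLpNorm_le_eLpNorm_of_exponent_le (by norm_num)
      (Lp.stronglyMeasurable zeta).aestronglyMeasurable)

lemma PhiFun_dist (g h : Lp (ℝ × ℝ) 2 mu01) (t : ℝ) :
    ‖PhiFun H g t - PhiFun H h t‖ ≤ betaBar * D * ‖g - h‖ := by
  have hC : 0 ≤ betaBar * D * ‖g - h‖ :=
    mul_nonneg (mul_nonneg H.hbetaBar.le H.hD) (norm_nonneg _)
  have hcongr : (fun y => ‖g y - h y‖) =ᵐ[mu01] fun y => ‖(g - h) y‖ := by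
    filter_upwards [Lp.coeFn_sub g h] with y hy
    rw [hy, Pi.sub_apply]
  have hInt : Integrable (fun y => ‖g y - h y‖) mu01 :=
    ((lp_int (g - h)).norm).congr hcongr.symm
  have hL1 : ∫ y, ‖g y - h y‖ ∂mu01 ≤ ‖g - h‖ := by
    rw [integral_congr_ae hcongr]; exact lp_l1_le (g - h)
  have hbound : ∀ᵐ x ∂mu01, ‖(PhiFun H g t - PhiFun H h t) x‖ ≤ betaBar * D * ‖g - h‖ := by
    filter_upwards [Lp.coeFn_sub (PhiFun H g t) (PhiFun H h t), PhiFun_coe H g t,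
      PhiFun_coe H h t] with x e1 e2 e3
    rw [e1, Pi.sub_apply, e2, e3]
    refine le_trans (Fker_dist H (Lp.stronglyMeasurable g).measurable
      (Lp.stronglyMeasurable h).measurable hInt t x) ?_
    have : (0:ℝ) ≤ betaBar * D := mul_nonneg H.hbetaBar.le H.hD
    exact mul_le_mul_of_nonneg_left hL1 this
  have hmain := Lp.norm_le_of_ae_bound hC hbound
  have huniv : (measureUnivNNReal mu01 : ℝ) = 1 := by
    simp [measureUnivNNReal, measure_univ]
  rw [huniv, Real.one_rpow, one_mul] at hmain
  exact hmain

/-- state-K clamp term -/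
noncomputable def cK (Abar betaK : ℝ) (u : ℝ → ℝ → RState → ℝ) (g : ℝ → ℝ × ℝ) (t y : ℝ) : ℝ :=
  clamp Abar (1 + betaK * (g y).2 * (u y t RState.K - u y t RState.I))

/-- state-I clamp term -/
noncomputable def cI (Abar betaI : ℝ) (lamI : ℝ → ℝ) (u : ℝ → ℝ → RState → ℝ)
    (g : ℝ → ℝ × ℝ) (t y : ℝ) : ℝ :=
  clamp Abar ((lamI t + 1 + betaI * (g y).1 * (u y t RState.I - u y t RState.K)) / 2)

/-- time-difference bound integrand -/
noncomputable def tb (Abar betaK betaI : ℝ) (lamI : ℝ → ℝ) (u : ℝ → ℝ → RState → ℝ)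
    (pK pI : ℝ → ℝ → ℝ) (g : ℝ → ℝ × ℝ) (t s y : ℝ) : ℝ :=
  (|cK Abar betaK u g t y - cK Abar betaK u g s y| + Abar * |pK y t - pK y s|)
    + (|cI Abar betaI lamI u g t y - cI Abar betaI lamI u g s y| + Abar * |pI y t - pI y s|)

lemma meas_cK {g : ℝ → ℝ × ℝ} (hg : Measurable g) (t : ℝ) :
    Measurable fun y => cK Abar betaK u g t y :=
  (cont_clamp Abar).measurable.comp (measurable_const.add
    ((measurable_const.mul (measurable_snd.comp hg)).mul
      ((meas_u H t RState.K).sub (meas_u H t RState.I))))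

lemma meas_cI {g : ℝ → ℝ × ℝ} (hg : Measurable g) (t : ℝ) :
    Measurable fun y => cI Abar betaI lamI u g t y :=
  (cont_clamp Abar).measurable.comp (((measurable_const.add
    ((measurable_const.mul (measurable_fst.comp hg)).mul
      ((meas_u H t RState.I).sub (meas_u H t RState.K)))).div_const 2))

lemma meas_tb {g : ℝ → ℝ × ℝ} (hg : Measurable g) (t s : ℝ) :
    Measurable fun y => tb Abar betaK betaI lamI u pK pI g t s y := by
  unfold tb
  exact ((((meas_cK H hg t).sub (meas_cK H hg s)).abs.add
      (measurable_const.mul ((meas_pK H t).sub (meas_pK H s)).abs)).add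
    ((((meas_cI H hg t).sub (meas_cI H hg s)).abs.add
      (measurable_const.mul ((meas_pI H t).sub (meas_pI H s)).abs))))

lemma tb_nonneg (g : ℝ → ℝ × ℝ) (t s y : ℝ) :
    0 ≤ tb Abar betaK betaI lamI u pK pI g t s y := by
  unfold tb
  have := H.hA.le
  positivity

lemma tb_le (g : ℝ → ℝ × ℝ) (t s y : ℝ) :
    tb Abar betaK betaI lamI u pK pI g t s y ≤ 6 * Abar := by
  unfold tb
  have hA := H.hA.le
  have bK : |cK Abar betaK u g t y - cK Abar betaK u g s y| ≤ Abar := by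
    obtain ⟨a1, a2⟩ := clamp_mem hA (1 + betaK * (g y).2 * (u y t RState.K - u y t RState.I))
    obtain ⟨b1, b2⟩ := clamp_mem hA (1 + betaK * (g y).2 * (u y s RState.K - u y s RState.I))
    rw [abs_le]; unfold cK; constructor <;> [linarith; linarith]
  have bI : |cI Abar betaI lamI u g t y - cI Abar betaI lamI u g s y| ≤ Abar := by
    obtain ⟨a1, a2⟩ := clamp_mem hA
      ((lamI t + 1 + betaI * (g y).1 * (u y t RState.I - u y t RState.K)) / 2)
    obtain ⟨b1, b2⟩ := clamp_mem hA
      ((lamI s + 1 + betaI * (g y).1 * (u y s RState.I - u y s RState.K)) / 2)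
    rw [abs_le]; unfold cI; constructor <;> [linarith; linarith]
  have pKd : |pK y t - pK y s| ≤ 2 := by
    obtain ⟨a1, a2⟩ := H.hpKrange y t
    obtain ⟨b1, b2⟩ := H.hpKrange y s
    rw [abs_le]; constructor <;> linarith
  have pId : |pI y t - pI y s| ≤ 2 := by
    obtain ⟨a1, a2⟩ := H.hpIrange y t
    obtain ⟨b1, b2⟩ := H.hpIrange y s
    rw [abs_le]; constructor <;> linarith
  nlinarith

lemma int_tb {g : ℝ → ℝ × ℝ} (hg : Measurable g) (t s : ℝ) :
    Integrable (fun y => tb Abar betaK betaI lamI u pK pI g t s y) mu01 := by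
  refine (integrable_const (6 * Abar)).mono' (meas_tb H hg t s).aestronglyMeasurable
    (Filter.Eventually.of_forall fun y => ?_)
  rw [Real.norm_eq_abs, abs_of_nonneg (tb_nonneg H g t s y)]
  exact tb_le H g t s y

lemma fkK_time_diff (g : ℝ → ℝ × ℝ) (t s x y : ℝ) :
    |fkK Abar betaK w u pK g t x y - fkK Abar betaK w u pK g s x y|
      ≤ |cK Abar betaK u g t y - cK Abar betaK u g s y| + Abar * |pK y t - pK y s| := by
  obtain ⟨hw0, hw1⟩ := H.hw x y
  obtain ⟨hpt0, hpt1⟩ := H.hpKrange y t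
  obtain ⟨hc0, hc1⟩ := clamp_mem H.hA.le (1 + betaK * (g y).2 * (u y s RState.K - u y s RState.I))
  have key : fkK Abar betaK w u pK g t x y - fkK Abar betaK w u pK g s x y
      = w x y * ((cK Abar betaK u g t y - cK Abar betaK u g s y) * pK y t
          + cK Abar betaK u g s y * (pK y t - pK y s)) := by
    unfold fkK cK; ring
  rw [key, abs_mul]
  have h1 : |(cK Abar betaK u g t y - cK Abar betaK u g s y) * pK y t
      + cK Abar betaK u g s y * (pK y t - pK y s)|
      ≤ |cK Abar betaK u g t y - cK Abar betaK u g s y| + Abar * |pK y t - pK y s| := by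
    refine le_trans (abs_add_le _ _) ?_
    rw [abs_mul, abs_mul]
    have e1 : |cK Abar betaK u g t y - cK Abar betaK u g s y| * |pK y t|
        ≤ |cK Abar betaK u g t y - cK Abar betaK u g s y| * 1 := by
      apply mul_le_mul_of_nonneg_left _ (abs_nonneg _)
      rw [abs_le]; exact ⟨by linarith, hpt1⟩
    have e2 : |cK Abar betaK u g s y| * |pK y t - pK y s| ≤ Abar * |pK y t - pK y s| := by
      apply mul_le_mul_of_nonneg_right _ (abs_nonneg _)
      unfold cK; rw [abs_le]; exact ⟨by linarith, hc1⟩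
    linarith
  calc |w x y| * |_| ≤ 1 * |_| := mul_le_mul_of_nonneg_right (by rwa [abs_of_nonneg hw0]) (abs_nonneg _)
    _ = |_| := one_mul _
    _ ≤ _ := h1

lemma fkI_time_diff (g : ℝ → ℝ × ℝ) (t s x y : ℝ) :
    |fkI Abar betaI lamI w u pI g t x y - fkI Abar betaI lamI w u pI g s x y|
      ≤ |cI Abar betaI lamI u g t y - cI Abar betaI lamI u g s y| + Abar * |pI y t - pI y s| := by
  obtain ⟨hw0, hw1⟩ := H.hw x y
  obtain ⟨hpt0, hpt1⟩ := H.hpIrange y t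
  obtain ⟨hc0, hc1⟩ := clamp_mem H.hA.le
    ((lamI s + 1 + betaI * (g y).1 * (u y s RState.I - u y s RState.K)) / 2)
  have key : fkI Abar betaI lamI w u pI g t x y - fkI Abar betaI lamI w u pI g s x y
      = w x y * ((cI Abar betaI lamI u g t y - cI Abar betaI lamI u g s y) * pI y t
          + cI Abar betaI lamI u g s y * (pI y t - pI y s)) := by
    unfold fkI cI; ring
  rw [key, abs_mul]
  have h1 : |(cI Abar betaI lamI u g t y - cI Abar betaI lamI u g s y) * pI y t
      + cI Abar betaI lamI u g s y * (pI y t - pI y s)|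
      ≤ |cI Abar betaI lamI u g t y - cI Abar betaI lamI u g s y| + Abar * |pI y t - pI y s| := by
    refine le_trans (abs_add_le _ _) ?_
    rw [abs_mul, abs_mul]
    have e1 : |cI Abar betaI lamI u g t y - cI Abar betaI lamI u g s y| * |pI y t|
        ≤ |cI Abar betaI lamI u g t y - cI Abar betaI lamI u g s y| * 1 := by
      apply mul_le_mul_of_nonneg_left _ (abs_nonneg _)
      rw [abs_le]; exact ⟨by linarith, hpt1⟩
    have e2 : |cI Abar betaI lamI u g s y| * |pI y t - pI y s| ≤ Abar * |pI y t - pI y s| := by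
      apply mul_le_mul_of_nonneg_right _ (abs_nonneg _)
      unfold cI; rw [abs_le]; exact ⟨by linarith, hc1⟩
    linarith
  calc |w x y| * |_| ≤ 1 * |_| := mul_le_mul_of_nonneg_right (by rwa [abs_of_nonneg hw0]) (abs_nonneg _)
    _ = |_| := one_mul _
    _ ≤ _ := h1

lemma Fker_time_diff {g : ℝ → ℝ × ℝ} (hg : Measurable g) (t s x : ℝ) :
    ‖Fker Abar betaK betaI lamI w u pK pI g t x - Fker Abar betaK betaI lamI w u pK pI g s x‖
      ≤ ∫ y, tb Abar betaK betaI lamI u pK pI g t s y ∂mu01 := by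
  have hint := int_tb H hg t s
  have coordK : |(∫ y, fkK Abar betaK w u pK g t x y ∂mu01)
      - ∫ y, fkK Abar betaK w u pK g s x y ∂mu01|
      ≤ ∫ y, tb Abar betaK betaI lamI u pK pI g t s y ∂mu01 := by
    rw [← integral_sub (int_fkK H hg t x) (int_fkK H hg s x)]
    calc |∫ y, (fkK Abar betaK w u pK g t x y - fkK Abar betaK w u pK g s x y) ∂mu01|
        ≤ ∫ y, |fkK Abar betaK w u pK g t x y - fkK Abar betaK w u pK g s x y| ∂mu01 := by
          simpa [Real.norm_eq_abs] using
            norm_integral_le_integral_norm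
              (fun y => fkK Abar betaK w u pK g t x y - fkK Abar betaK w u pK g s x y) (μ := mu01)
      _ ≤ ∫ y, tb Abar betaK betaI lamI u pK pI g t s y ∂mu01 := by
          apply integral_mono ((int_fkK H hg t x).sub (int_fkK H hg s x)).abs hint
          intro y
          refine le_trans (fkK_time_diff H g t s x y) ?_
          unfold tb
          have h2 : (0:ℝ) ≤ |cI Abar betaI lamI u g t y - cI Abar betaI lamI u g s y|
              + Abar * |pI y t - pI y s| := by
            have := H.hA.le; positivity
          dsimp only [tb]; linarith
  have coordI : |(∫ y, fkI Abar betaI lamI w u pI g t x y ∂mu01)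
      - ∫ y, fkI Abar betaI lamI w u pI g s x y ∂mu01|
      ≤ ∫ y, tb Abar betaK betaI lamI u pK pI g t s y ∂mu01 := by
    rw [← integral_sub (int_fkI H hg t x) (int_fkI H hg s x)]
    calc |∫ y, (fkI Abar betaI lamI w u pI g t x y - fkI Abar betaI lamI w u pI g s x y) ∂mu01|
        ≤ ∫ y, |fkI Abar betaI lamI w u pI g t x y - fkI Abar betaI lamI w u pI g s x y| ∂mu01 := by
          simpa [Real.norm_eq_abs] using
            norm_integral_le_integral_norm
              (fun y => fkI Abar betaI lamI w u pI g t x y - fkI Abar betaI lamI w u pI g s x y)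
              (μ := mu01)
      _ ≤ ∫ y, tb Abar betaK betaI lamI u pK pI g t s y ∂mu01 := by
          apply integral_mono ((int_fkI H hg t x).sub (int_fkI H hg s x)).abs hint
          intro y
          refine le_trans (fkI_time_diff H g t s x y) ?_
          unfold tb
          have h2 : (0:ℝ) ≤ |cK Abar betaK u g t y - cK Abar betaK u g s y|
              + Abar * |pK y t - pK y s| := by
            have := H.hA.le; positivity
          dsimp only [tb]; linarith
  rw [Prod.norm_def]
  exact max_le (by simpa [Fker, Real.norm_eq_abs] using coordK)
    (by simpa [Fker, Real.norm_eq_abs] using coordI)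

lemma PhiFun_time_diff (g : Lp (ℝ × ℝ) 2 mu01) (t s : ℝ) :
    ‖PhiFun H g t - PhiFun H g s‖
      ≤ ∫ y, tb Abar betaK betaI lamI u pK pI (⇑g) t s y ∂mu01 := by
  set hg := (Lp.stronglyMeasurable g).measurable
  have hC : 0 ≤ ∫ y, tb Abar betaK betaI lamI u pK pI (⇑g) t s y ∂mu01 :=
    integral_nonneg fun y => tb_nonneg H _ t s y
  have hbound : ∀ᵐ x ∂mu01, ‖(PhiFun H g t - PhiFun H g s) x‖
      ≤ ∫ y, tb Abar betaK betaI lamI u pK pI (⇑g) t s y ∂mu01 := by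
    filter_upwards [Lp.coeFn_sub (PhiFun H g t) (PhiFun H g s), PhiFun_coe H g t,
      PhiFun_coe H g s] with x e1 e2 e3
    rw [e1, Pi.sub_apply, e2, e3]
    exact Fker_time_diff H hg t s x
  have hmain := Lp.norm_le_of_ae_bound hC hbound
  have huniv : (measureUnivNNReal mu01 : ℝ) = 1 := by
    simp [measureUnivNNReal, measure_univ]
  rw [huniv, Real.one_rpow, one_mul] at hmain
  exact hmain

lemma tb_tendsto {g : ℝ → ℝ × ℝ} (hg : Measurable g) {s : ℝ} (hs : s ∈ Set.Icc 0 T) :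
    Filter.Tendsto (fun t => ∫ y, tb Abar betaK betaI lamI u pK pI g t s y ∂mu01)
      (nhdsWithin s (Set.Icc 0 T)) (nhds 0) := by
  have key := MeasureTheory.tendsto_integral_filter_of_dominated_convergence
    (μ := mu01) (l := nhdsWithin s (Set.Icc 0 T))
    (F := fun t y => tb Abar betaK betaI lamI u pK pI g t s y) (f := fun _ => 0)
    (bound := fun _ => 6 * Abar)
    (Filter.Eventually.of_forall fun t => (meas_tb H hg t s).aestronglyMeasurable)
    (Filter.Eventually.of_forall fun t => Filter.Eventually.of_forall fun y => by
      rw [Real.norm_eq_abs, abs_of_nonneg (tb_nonneg H g t s y)]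
      exact tb_le H g t s y)
    (integrable_const _)
    (Filter.Eventually.of_forall fun y => ?_)
  · simpa using key
  · -- pointwise tendsto of tb to 0
    have hpt : ContinuousWithinAt
        (fun t => tb Abar betaK betaI lamI u pK pI g t s y) (Set.Icc 0 T) s := by
      unfold tb cK cI
      have hK : Continuous fun t => clamp Abar
          (1 + betaK * (g y).2 * (u y t RState.K - u y t RState.I)) :=
        (cont_clamp Abar).comp (continuous_const.add
          (continuous_const.mul ((H.hucont y RState.K).sub (H.hucont y RState.I))))
      have hIc : ContinuousWithinAt (fun t => clamp Abar
          ((lamI t + 1 + betaI * (g y).1 * (u y t RState.I - u y t RState.K)) / 2))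
          (Set.Icc 0 T) s := by
        apply (cont_clamp Abar).continuousAt.comp_continuousWithinAt
        apply ContinuousWithinAt.div_const
        exact (((H.hlamI s hs).add continuousWithinAt_const).add
          (continuous_const.mul
            ((H.hucont y RState.I).sub (H.hucont y RState.K))).continuousWithinAt)
      exact (((hK.continuousWithinAt.sub continuousWithinAt_const).abs.add
          (continuousWithinAt_const.mul
            (((H.hpKcont y).continuousWithinAt.sub continuousWithinAt_const).abs))).add
        (((hIc.sub continuousWithinAt_const).abs.add
          (continuousWithinAt_const.mul
            (((H.hpIcont y).continuousWithinAt.sub continuousWithinAt_const).abs)))))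
    have h0 : tb Abar betaK betaI lamI u pK pI g s s y = 0 := by
      unfold tb; simp
    have h3 : Filter.Tendsto (fun t => tb Abar betaK betaI lamI u pK pI g t s y)
        (nhdsWithin s (Set.Icc 0 T)) (nhds (tb Abar betaK betaI lamI u pK pI g s s y)) := hpt
    rw [h0] at h3
    exact h3

lemma PhiFun_contOn {Z : ℝ → Lp (ℝ × ℝ) 2 mu01} (hZ : ContinuousOn Z (Set.Icc 0 T)) :
    ContinuousOn (fun t => PhiFun H (Z t) t) (Set.Icc 0 T) := by
  intro s hs
  rw [ContinuousWithinAt, tendsto_iff_norm_sub_tendsto_zero]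
  have hb : ∀ t : ℝ, ‖PhiFun H (Z t) t - PhiFun H (Z s) s‖
      ≤ betaBar * D * ‖Z t - Z s‖
        + ∫ y, tb Abar betaK betaI lamI u pK pI (⇑(Z s)) t s y ∂mu01 := by
    intro t
    calc ‖PhiFun H (Z t) t - PhiFun H (Z s) s‖
        ≤ ‖PhiFun H (Z t) t - PhiFun H (Z s) t‖ + ‖PhiFun H (Z s) t - PhiFun H (Z s) s‖ :=
          norm_sub_le_norm_sub_add_norm_sub _ _ _
      _ ≤ betaBar * D * ‖Z t - Z s‖
          + ∫ y, tb Abar betaK betaI lamI u pK pI (⇑(Z s)) t s y ∂mu01 :=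
          add_le_add (PhiFun_dist H _ _ t) (PhiFun_time_diff H (Z s) t s)
  have h1 : Filter.Tendsto (fun t => betaBar * D * ‖Z t - Z s‖)
      (nhdsWithin s (Set.Icc 0 T)) (nhds 0) := by
    have := (tendsto_iff_norm_sub_tendsto_zero).mp (hZ s hs)
    simpa using this.const_mul (betaBar * D)
  have h2 := tb_tendsto H (Lp.stronglyMeasurable (Z s)).measurable hs
  have hsum := h1.add h2
  rw [add_zero] at hsum
  exact squeeze_zero' (Filter.Eventually.of_forall fun t => norm_nonneg _)
    (Filter.Eventually.of_forall hb) hsum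

/-- The time-indexed aggregate map on the space of continuous curves. -/
noncomputable def Theta : C(Set.Icc (0:ℝ) T, Lp (ℝ × ℝ) 2 mu01) →
    C(Set.Icc (0:ℝ) T, Lp (ℝ × ℝ) 2 mu01) := fun g =>
  ⟨Set.restrict _ (fun t => PhiFun H (g (Set.projIcc 0 T H.hT.le t)) t),
   ContinuousOn.restrict (PhiFun_contOn H
     ((g.continuous.comp continuous_projIcc).continuousOn))⟩

lemma Theta_apply (g : C(Set.Icc (0:ℝ) T, Lp (ℝ × ℝ) 2 mu01)) (t : Set.Icc (0:ℝ) T) :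
    Theta H g t = PhiFun H (g t) t := by
  show PhiFun H (g (Set.projIcc 0 T H.hT.le ↑t)) ↑t = _
  rw [Set.projIcc_val]

lemma Theta_contracting (hsmall : betaBar * D < 1) :
    ContractingWith (Real.toNNReal (betaBar * D)) (Theta H) := by
  have hBD : 0 ≤ betaBar * D := mul_nonneg H.hbetaBar.le H.hD
  constructor
  · rw [← Real.toNNReal_one]
    exact (Real.toNNReal_lt_toNNReal_iff one_pos).mpr hsmall
  · apply LipschitzWith.of_dist_le_mul
    intro g h
    have hK : (Real.toNNReal (betaBar * D) : ℝ) = betaBar * D := Real.coe_toNNReal _ hBD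
    rw [hK]
    rw [ContinuousMap.dist_le (mul_nonneg hBD dist_nonneg)]
    intro t
    rw [Theta_apply, Theta_apply, dist_eq_norm]
    calc ‖PhiFun H (g t) ↑t - PhiFun H (h t) ↑t‖
        ≤ betaBar * D * ‖g t - h t‖ := PhiFun_dist H _ _ t
      _ = betaBar * D * dist (g t) (h t) := by rw [dist_eq_norm]
      _ ≤ betaBar * D * dist g h :=
          mul_le_mul_of_nonneg_left (ContinuousMap.dist_apply_le_dist t) hBD

end hyp
end SKIR

/-- the equilibrium-aggregate map of the SKIR graphon game,
`Φ(Z)(t)(x) = (∫₀¹ w(x,y) φ̂_K(y,t,Z(t)(y)) p_K(y,t) dy, ∫₀¹ w(x,y) φ̂_I(y,t,Z(t)(y)) p_I(y,t) dy)`,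
with the clamped (admissible) equilibrium controls
`φ̂_K = clamp_{[0,Ā]}(1 + β_K z_I (u(K) − u(I)))` and
`φ̂_I = clamp_{[0,Ā]}(½(λ_I(t) + 1 + β_I z_K (u(I) − u(K))))`, maps `𝒵` into `𝒵`, and if
`β̄·D < 1` it has exactly one fixed point in `𝒵` (uniqueness as functions on `[0,T]`). -/
theorem skir_aggregate_fixed_point
    (T Abar betaBar D : ℝ) (hT : 0 < T) (hA : 0 < Abar) (hbetaBar : 0 < betaBar) (hD : 0 ≤ D)
    (betaK betaI : ℝ)
    (hbetaK : betaK ∈ Set.Icc (0:ℝ) betaBar) (hbetaI : betaI ∈ Set.Icc (0:ℝ) betaBar)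
    (lamI : ℝ → ℝ) (hlamI : ContinuousOn lamI (Set.Icc 0 T))
    (w : ℝ → ℝ → ℝ) (hwmeas : Measurable (Function.uncurry w))
    (hwsymm : ∀ x y, w x y = w y x) (hw : ∀ x y, w x y ∈ Set.Icc (0:ℝ) 1)
    (u : ℝ → ℝ → RState → ℝ)
    (humeas : ∀ e, Measurable fun q : ℝ × ℝ => u q.1 q.2 e)
    (hucont : ∀ y e, Continuous fun t => u y t e)
    (huD : ∀ (y t : ℝ) (e e' : RState), |u y t e - u y t e'| ≤ D)
    (pK pI : ℝ → ℝ → ℝ)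
    (hpKmeas : Measurable fun q : ℝ × ℝ => pK q.1 q.2)
    (hpImeas : Measurable fun q : ℝ × ℝ => pI q.1 q.2)
    (hpKcont : ∀ y, Continuous fun t => pK y t)
    (hpIcont : ∀ y, Continuous fun t => pI y t)
    (hpKrange : ∀ y t, pK y t ∈ Set.Icc (0:ℝ) 1)
    (hpIrange : ∀ y t, pI y t ∈ Set.Icc (0:ℝ) 1) :
    ∃ Phi : (ℝ → Lp (ℝ × ℝ) 2 mu01) → (ℝ → Lp (ℝ × ℝ) 2 mu01),
      (∀ Z, memZ T Abar Z → ∀ t ∈ Set.Icc (0:ℝ) T,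
        ∀ᵐ x ∂mu01, Phi Z t x =
          ((∫ y in Set.Icc (0:ℝ) 1, w x y
              * clamp Abar (1 + betaK * (Z t y).2 * (u y t RState.K - u y t RState.I))
              * pK y t),
           (∫ y in Set.Icc (0:ℝ) 1, w x y
              * clamp Abar ((lamI t + 1 + betaI * (Z t y).1
                  * (u y t RState.I - u y t RState.K)) / 2)
              * pI y t))) ∧
      (∀ Z, memZ T Abar Z → memZ T Abar (Phi Z)) ∧
      (betaBar * D < 1 →
        ∃ Z, memZ T Abar Z ∧ (∀ t ∈ Set.Icc (0:ℝ) T, Phi Z t = Z t) ∧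
          ∀ Z', memZ T Abar Z' → (∀ t ∈ Set.Icc (0:ℝ) T, Phi Z' t = Z' t) →
            ∀ t ∈ Set.Icc (0:ℝ) T, Z' t = Z t) := by
  have H : SKIR.Hyp T Abar betaBar D betaK betaI lamI w u pK pI :=
    ⟨hT, hA, hbetaBar, hD, hbetaK, hbetaI, hlamI, hwmeas, hw, humeas, hucont, huD,
     hpKmeas, hpImeas, hpKcont, hpIcont, hpKrange, hpIrange⟩
  refine ⟨fun Z t => SKIR.PhiFun H (Z t) t, ?_, ?_, ?_⟩
  · intro Z _ t _
    filter_upwards [SKIR.PhiFun_coe H (Z t) t] with x hx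
    rw [hx]
    rfl
  · intro Z hZ
    refine ⟨SKIR.PhiFun_contOn H hZ.1, fun t _ => ?_⟩
    filter_upwards [SKIR.PhiFun_coe H (Z t) t] with x hx
    rw [hx]
    exact SKIR.Fker_coord_abs H t x
  · intro hsmall
    have hcontr := SKIR.Theta_contracting H hsmall
    haveI : Nonempty (Set.Icc (0:ℝ) T) := ⟨⟨0, le_refl 0, hT.le⟩⟩
    set gstar := ContractingWith.fixedPoint (SKIR.Theta H) hcontr with hgstar
    have hfix : SKIR.Theta H gstar = gstar := hcontr.fixedPoint_isFixedPt
    set Zs : ℝ → Lp (ℝ × ℝ) 2 mu01 := fun t => gstar (Set.projIcc 0 T hT.le t) with hZs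
    have hZsIcc : ∀ (t : ℝ) (ht : t ∈ Set.Icc (0:ℝ) T), Zs t = gstar ⟨t, ht⟩ := by
      intro t ht
      show gstar (Set.projIcc 0 T hT.le t) = gstar ⟨t, ht⟩
      rw [Set.projIcc_of_mem _ ht]
    have hZsfix : ∀ t ∈ Set.Icc (0:ℝ) T, SKIR.PhiFun H (Zs t) t = Zs t := by
      intro t ht
      have h1 : SKIR.Theta H gstar ⟨t, ht⟩ = gstar ⟨t, ht⟩ := by rw [hfix]
      rw [SKIR.Theta_apply] at h1
      rw [hZsIcc t ht]
      exact h1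
    have hZsmem : memZ T Abar Zs := by
      constructor
      · rw [hZs]
        exact (gstar.continuous.comp continuous_projIcc).continuousOn
      · intro t ht
        have hcoe : ⇑(Zs t) =ᵐ[mu01]
            SKIR.Fker Abar betaK betaI lamI w u pK pI (⇑(Zs t)) t := by
          have := SKIR.PhiFun_coe H (Zs t) t
          rwa [hZsfix t ht] at this
        filter_upwards [hcoe] with x hx
        rw [hx]
        exact SKIR.Fker_coord_abs H t x
    refine ⟨Zs, hZsmem, fun t ht => hZsfix t ht, ?_⟩
    intro Z' hZ' hfix' t ht
    set g' : C(Set.Icc (0:ℝ) T, Lp (ℝ × ℝ) 2 mu01) :=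
      ⟨Set.restrict _ Z', hZ'.1.restrict⟩ with hg'
    have hg'fix : SKIR.Theta H g' = g' := by
      refine ContinuousMap.ext fun s => ?_
      rw [SKIR.Theta_apply]
      show SKIR.PhiFun H (Z' ↑s) ↑s = Z' ↑s
      exact hfix' ↑s s.2
    have hgu : g' = gstar := hcontr.fixedPoint_unique hg'fix
    calc Z' t = g' ⟨t, ht⟩ := rfl
      _ = gstar ⟨t, ht⟩ := by rw [hgu]
      _ = Zs t := (hZsIcc t ht).symm
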